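/- Let z, z̄ : [0,1] → ℝ^d satisfy z' = σ(Az + b), z̄' = σ((A+Δ)z̄ + b) with z(0) = z̄(0), where σ : ℝ → ℝ is differentiable with σ' ∈ [α, 1], 0 < α ≤ 1, applied entrywise. Let δ = max over diagonal D with entries in [α,1] of μ₂(D(A+Δ)), assume δ ≠ 0, and let M = max_{t∈[0,1]} ‖z(t)‖₂. Then ‖z(1) − z̄(1)‖₂ ≤ M·σ_max(Δ)·(e^δ − 1)/δ. -/

import Mathlib

open Matrix

noncomputable def norm2 {n : ℕ} (v : Fin n → ℝ) : ℝ := Real.sqrt (∑ i, v i ^ 2)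

def inner2 {n : ℕ} (u v : Fin n → ℝ) : ℝ := ∑ i, u i * v i

noncomputable def specNorm {m n : ℕ} (A : Matrix (Fin m) (Fin n) ℝ) : ℝ :=
  ‖LinearMap.toContinuousLinearMap (Matrix.toEuclideanLin A)‖

theorem symPart_isHermitian {n : ℕ} (A : Matrix (Fin n) (Fin n) ℝ) :
    (((1:ℝ)/2) • (A + Aᵀ)).IsHermitian := by
  unfold Matrix.IsHermitian
  ext i j
  simp [Matrix.conjTranspose_apply, Matrix.transpose_apply]
  ring

/-- The logarithmic 2-norm: largest eigenvalue of the symmetric part (A + Aᵀ)/2. -/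
noncomputable def mu2 {n : ℕ} (A : Matrix (Fin n) (Fin n) ℝ) : ℝ :=
  ⨆ i, (symPart_isHermitian A).eigenvalues i

/-- The singular values of A: square roots of the eigenvalues of AᵀA. -/
noncomputable def singVals {m n : ℕ} (A : Matrix (Fin m) (Fin n) ℝ) : Fin n → ℝ :=
  fun i => Real.sqrt ((show (Aᵀ * A).IsHermitian by
    simpa [Matrix.conjTranspose_eq_transpose_of_trivial] using Matrix.isHermitian_conjTranspose_mul_self A).eigenvalues i)

/-! By the mean value theorem, `σ(Az + b) - σ((A + Δ)z̄ + b) = D((A + Δ)(z - z̄) - Δz)` for a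
diagonal `D` with entries in `[α, 1]`. Hence `w = z - z̄` satisfies
`⟪w, w'⟫ ≤ δ‖w‖² + σ_max(Δ) M ‖w‖`, and a Grönwall argument for `‖w‖`, started from
`w 0 = 0`, gives `‖w 1‖ ≤ σ_max(Δ) M (e^δ - 1) / δ`. -/

open Set Filter Topology WithLp
open scoped RealInnerProductSpace

section Gronwall

variable {E : Type*} [NormedAddCommGroup E] [InnerProductSpace ℝ E]

theorem HasDerivWithinAt.sqrt_norm_sq_add_sq {f : ℝ → E} {f' : E} {s : Set ℝ} {x c : ℝ}
    (hf : HasDerivWithinAt f f' s x) (hc : c ≠ 0) :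
    HasDerivWithinAt (fun t => √(‖f t‖ ^ 2 + c ^ 2)) (⟪f x, f'⟫ / √(‖f x‖ ^ 2 + c ^ 2)) s x := by
  have hpos : 0 < ‖f x‖ ^ 2 + c ^ 2 := by positivity
  convert (hf.norm_sq.add_const (c ^ 2)).sqrt hpos.ne' using 1
  field_simp

/- Grönwall applied to the smooth majorant `√(‖f‖² + c²)` of `‖f‖`, whose right derivative is
controlled by the inner-product bound even where `f` vanishes. -/
theorem norm_le_gronwallBound_of_inner_deriv_right_le_of_pos {f f' : ℝ → E} {δ K ε a b c : ℝ}
    (hf : ContinuousOn f (Icc a b)) (hf' : ∀ x ∈ Ico a b, HasDerivWithinAt f (f' x) (Ici x) x)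
    (ha : ‖f a‖ ≤ δ) (hε : 0 ≤ ε) (hc : 0 < c)
    (bound : ∀ x ∈ Ico a b, ⟪f x, f' x⟫ ≤ K * ‖f x‖ ^ 2 + ε * ‖f x‖) :
    ∀ x ∈ Icc a b, ‖f x‖ ≤ gronwallBound (δ + c) K (ε + |K| * c) (x - a) := by
  set g : ℝ → ℝ := fun t => √(‖f t‖ ^ 2 + c ^ 2)
  have hg_sq (t : ℝ) : g t ^ 2 = ‖f t‖ ^ 2 + c ^ 2 := Real.sq_sqrt (by positivity)
  have hg_pos (t : ℝ) : 0 < g t := Real.sqrt_pos.mpr (by positivity)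
  have hfg (t : ℝ) : ‖f t‖ ≤ g t := Real.le_sqrt_of_sq_le (by nlinarith)
  have hcg (t : ℝ) : c ≤ g t := Real.le_sqrt_of_sq_le (by nlinarith [sq_nonneg ‖f t‖])
  have hg_deriv_le (x : ℝ) (hx : x ∈ Ico a b) :
      ⟪f x, f' x⟫ / g x ≤ K * g x + (ε + |K| * c) := by
    -- `K ‖f‖² = K g² - K c²` and `-K c² ≤ |K| c g`, `ε ‖f‖ ≤ ε g`
    rw [div_le_iff₀ (hg_pos x)]
    have hK : 0 ≤ K + |K| := by linarith [neg_abs_le K]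
    have hKf : K * ‖f x‖ ^ 2 = K * g x ^ 2 - K * c ^ 2 := by rw [hg_sq]; ring
    nlinarith [bound x hx, mul_nonneg (mul_nonneg (abs_nonneg K) hc.le) (sub_nonneg.mpr (hcg x)),
      mul_nonneg hε (sub_nonneg.mpr (hfg x)), mul_nonneg hK (sq_nonneg c)]
  have hga : g a ≤ δ + c := by
    have hδ : 0 ≤ δ := (norm_nonneg _).trans ha
    refine (Real.sqrt_le_sqrt ?_).trans_eq (Real.sqrt_sq (by positivity))
    nlinarith [norm_nonneg (f a)]
  have hg_le := le_gronwallBound_of_liminf_deriv_right_le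
    (Real.continuous_sqrt.comp_continuousOn ((hf.norm.pow 2).add continuousOn_const))
    (fun x hx r hr => ((hf' x hx).sqrt_norm_sq_add_sq hc.ne').liminf_right_slope_le hr)
    hga hg_deriv_le
  exact fun x hx => (hfg x).trans (hg_le x hx)

theorem continuous_gronwallBound_add_mul (δ K ε x p q : ℝ) :
    Continuous fun c => gronwallBound (δ + p * c) K (ε + q * c) x := by
  unfold gronwallBound
  split_ifs <;> fun_prop

theorem norm_le_gronwallBound_of_inner_deriv_right_le {f f' : ℝ → E} {δ K ε a b : ℝ}
    (hf : ContinuousOn f (Icc a b)) (hf' : ∀ x ∈ Ico a b, HasDerivWithinAt f (f' x) (Ici x) x)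
    (ha : ‖f a‖ ≤ δ) (hε : 0 ≤ ε)
    (bound : ∀ x ∈ Ico a b, ⟪f x, f' x⟫ ≤ K * ‖f x‖ ^ 2 + ε * ‖f x‖) :
    ∀ x ∈ Icc a b, ‖f x‖ ≤ gronwallBound δ K ε (x - a) := by
  intro x hx
  have hlim : Tendsto (fun c => gronwallBound (δ + 1 * c) K (ε + |K| * c) (x - a))
      (𝓝[>] 0) (𝓝 (gronwallBound δ K ε (x - a))) := by
    simpa using ((continuous_gronwallBound_add_mul δ K ε (x - a) 1 |K|).tendsto 0).mono_left
      nhdsWithin_le_nhds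
  refine ge_of_tendsto hlim (eventually_nhdsWithin_of_forall fun c (hc : 0 < c) => ?_)
  simpa using norm_le_gronwallBound_of_inner_deriv_right_le_of_pos hf hf' ha hε hc bound x hx

end Gronwall

section Spectral

variable {ι : Type*} [Fintype ι]

theorem Matrix.IsHermitian.inner_mulVec_le [DecidableEq ι] {S : Matrix ι ι ℝ} (hS : S.IsHermitian)
    {c : ℝ} (hc : ∀ i, hS.eigenvalues i ≤ c) (x : ι → ℝ) :
    ⟪toLp 2 x, toLp 2 (S *ᵥ x)⟫ ≤ c * ‖toLp 2 x‖ ^ 2 := by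
  set e := hS.eigenvectorBasis
  have he (i : ι) : ⟪e i, toLp 2 (S *ᵥ x)⟫ = hS.eigenvalues i * ⟪e i, toLp 2 x⟫ := by
    change ⟪e i, toEuclideanLin S (toLp 2 x)⟫ = _
    rw [← isSymmetric_toEuclideanLin_iff.mpr hS, toLpLin_apply,
      show (e i).ofLp = ⇑(e i) from rfl, hS.mulVec_eigenvectorBasis]
    exact real_inner_smul_left _ _ _
  calc ⟪toLp 2 x, toLp 2 (S *ᵥ x)⟫ = ∑ i, hS.eigenvalues i * ⟪e i, toLp 2 x⟫ ^ 2 := by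
        rw [← e.sum_inner_mul_inner]
        refine Finset.sum_congr rfl fun i _ => ?_
        rw [he, real_inner_comm]; ring
    _ ≤ ∑ i, c * ⟪e i, toLp 2 x⟫ ^ 2 := by gcongr with i; exact hc i
    _ = c * ‖toLp 2 x‖ ^ 2 := by rw [← Finset.mul_sum, e.sum_sq_inner_right]

theorem inner_mulVec_transpose {κ : Type*} [Fintype κ] (B : Matrix κ ι ℝ) (x : ι → ℝ)
    (y : κ → ℝ) :
    ⟪toLp 2 x, toLp 2 (Bᵀ *ᵥ y)⟫ = ⟪toLp 2 (B *ᵥ x), toLp 2 y⟫ := by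
  simp only [EuclideanSpace.inner_toLp_toLp, star_trivial, mulVec_transpose, dotProduct_mulVec]

theorem norm_toLp_diagonal_mulVec_le [DecidableEq ι] {k : ι → ℝ} (hk : ∀ i, |k i| ≤ 1) (x : ι → ℝ) :
    ‖toLp 2 (diagonal k *ᵥ x)‖ ≤ ‖toLp 2 x‖ := by
  simp only [EuclideanSpace.norm_eq, mulVec_diagonal, norm_mul]
  gcongr with i
  exact mul_le_of_le_one_left (norm_nonneg _) (hk i)

end Spectral

theorem norm2_eq_norm_toLp {n : ℕ} (v : Fin n → ℝ) : norm2 v = ‖toLp 2 v‖ := by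
  simp [norm2, EuclideanSpace.norm_eq]

theorem inner_mulVec_le_mu2_mul {n : ℕ} (B : Matrix (Fin n) (Fin n) ℝ) (x : Fin n → ℝ) :
    ⟪toLp 2 x, toLp 2 (B *ᵥ x)⟫ ≤ mu2 B * ‖toLp 2 x‖ ^ 2 := by
  have hsym : ⟪toLp 2 x, toLp 2 (B *ᵥ x)⟫ = ⟪toLp 2 x, toLp 2 (((1 / 2 : ℝ) • (B + Bᵀ)) *ᵥ x)⟫ := by
    rw [smul_mulVec, add_mulVec, toLp_smul, toLp_add, inner_smul_right, inner_add_right,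
      inner_mulVec_transpose, real_inner_comm (toLp 2 x)]
    ring
  rw [hsym]
  exact (symPart_isHermitian B).inner_mulVec_le
    (fun i => le_ciSup (Finite.bddAbove (finite_range _)) i) x

theorem norm_toLp_mulVec_le_iSup_singVals {m n : ℕ} (A : Matrix (Fin m) (Fin n) ℝ)
    (x : Fin n → ℝ) : ‖toLp 2 (A *ᵥ x)‖ ≤ (⨆ i, singVals A i) * ‖toLp 2 x‖ := by
  set s := ⨆ i, singVals A i
  have hs : 0 ≤ s := Real.iSup_nonneg fun i => Real.sqrt_nonneg _
  have hAA : (Aᵀ * A).PosSemidef := by simpa using posSemidef_conjTranspose_mul_self A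
  have heig (i : Fin n) : hAA.1.eigenvalues i ≤ s ^ 2 := by
    calc hAA.1.eigenvalues i = singVals A i ^ 2 := (Real.sq_sqrt (hAA.eigenvalues_nonneg i)).symm
      _ ≤ s ^ 2 := by
        gcongr
        · exact Real.sqrt_nonneg _
        · exact le_ciSup (Finite.bddAbove (finite_range _)) i
  have hsq : ‖toLp 2 (A *ᵥ x)‖ ^ 2 ≤ (s * ‖toLp 2 x‖) ^ 2 := by
    rw [← real_inner_self_eq_norm_sq, ← inner_mulVec_transpose, mulVec_mulVec, mul_pow]
    exact hAA.1.inner_mulVec_le heig x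
  exact (pow_le_pow_iff_left₀ (norm_nonneg _) (by positivity) two_ne_zero).1 hsq

section MeanValue

variable {σ : ℝ → ℝ} {α β : ℝ}

theorem exists_mem_Icc_sub_eq_mul_sub (hσ : Differentiable ℝ σ)
    (hσ' : ∀ t, deriv σ t ∈ Icc α β) (u v : ℝ) :
    ∃ k ∈ Icc α β, σ u - σ v = k * (u - v) := by
  rcases lt_trichotomy v u with h | rfl | h
  · obtain ⟨c, -, hc⟩ := exists_deriv_eq_slope σ h hσ.continuous.continuousOn hσ.differentiableOn
    exact ⟨_, hσ' c, by rw [hc, div_mul_cancel₀ _ (sub_ne_zero.2 h.ne')]⟩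
  · exact ⟨_, hσ' v, by ring⟩
  · obtain ⟨c, -, hc⟩ := exists_deriv_eq_slope σ h hσ.continuous.continuousOn hσ.differentiableOn
    refine ⟨_, hσ' c, ?_⟩
    rw [hc, div_mul_eq_mul_div, eq_div_iff (sub_ne_zero.2 h.ne')]
    ring

theorem exists_diagonal_mulVec_eq_sub {ι : Type*} [Fintype ι] [DecidableEq ι]
    (hσ : Differentiable ℝ σ) (hσ' : ∀ t, deriv σ t ∈ Icc α β) (u v : ι → ℝ) :
    ∃ k : ι → ℝ, (∀ i, k i ∈ Icc α β) ∧
      (fun i => σ (u i) - σ (v i)) = diagonal k *ᵥ (u - v) := by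
  choose k hk hkuv using fun i => exists_mem_Icc_sub_eq_mul_sub hσ hσ' (u i) (v i)
  exact ⟨k, hk, funext fun i => by rw [mulVec_diagonal, hkuv, Pi.sub_apply]⟩

end MeanValue

theorem inner_sub_perturbed_field_le {d : ℕ} {σ : ℝ → ℝ} {α δ : ℝ} (hα : 0 ≤ α)
    (hσ : Differentiable ℝ σ) (hσ' : ∀ t, deriv σ t ∈ Icc α 1)
    {A Δ : Matrix (Fin d) (Fin d) ℝ} (b : Fin d → ℝ)
    (hδ : ∀ k : Fin d → ℝ, (∀ i, k i ∈ Icc α 1) → mu2 (diagonal k * (A + Δ)) ≤ δ)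
    (x y : Fin d → ℝ) :
    ⟪toLp 2 (x - y), toLp 2 (fun i => σ ((A *ᵥ x) i + b i) - σ (((A + Δ) *ᵥ y) i + b i))⟫ ≤
      δ * ‖toLp 2 (x - y)‖ ^ 2 + (⨆ i, singVals Δ i) * ‖toLp 2 x‖ * ‖toLp 2 (x - y)‖ := by
  obtain ⟨k, hk, hσk⟩ := exists_diagonal_mulVec_eq_sub hσ hσ' (A *ᵥ x + b) ((A + Δ) *ᵥ y + b)
  have hk1 (i : Fin d) : |k i| ≤ 1 := abs_le.2 ⟨by linarith [(hk i).1], (hk i).2⟩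
  have hsplit : (A *ᵥ x + b) - ((A + Δ) *ᵥ y + b) = (A + Δ) *ᵥ (x - y) - Δ *ᵥ x := by
    simp only [mulVec_sub, add_mulVec]; abel
  have hfield : (fun i => σ ((A *ᵥ x) i + b i) - σ (((A + Δ) *ᵥ y) i + b i)) =
      (diagonal k * (A + Δ)) *ᵥ (x - y) - diagonal k *ᵥ (Δ *ᵥ x) := by
    rw [← mulVec_mulVec, ← mulVec_sub, ← hsplit, ← hσk]; rfl
  have hpert : ‖toLp 2 (diagonal k *ᵥ (Δ *ᵥ x))‖ ≤ (⨆ i, singVals Δ i) * ‖toLp 2 x‖ :=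
    (norm_toLp_diagonal_mulVec_le hk1 _).trans (norm_toLp_mulVec_le_iSup_singVals Δ x)
  have hlin : ⟪toLp 2 (x - y), toLp 2 ((diagonal k * (A + Δ)) *ᵥ (x - y))⟫ ≤
      δ * ‖toLp 2 (x - y)‖ ^ 2 :=
    (inner_mulVec_le_mu2_mul _ _).trans (mul_le_mul_of_nonneg_right (hδ k hk) (sq_nonneg _))
  have hcs : -⟪toLp 2 (x - y), toLp 2 (diagonal k *ᵥ (Δ *ᵥ x))⟫ ≤
      (⨆ i, singVals Δ i) * ‖toLp 2 x‖ * ‖toLp 2 (x - y)‖ := by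
    rw [mul_comm _ ‖toLp 2 (x - y)‖]
    exact (neg_le_abs _).trans ((abs_real_inner_le_norm _ _).trans (by gcongr))
  rw [hfield, toLp_sub 2 ((diagonal k * (A + Δ)) *ᵥ (x - y)), inner_sub_right]
  linarith

theorem perturbed_flow_upper_bound_general {d : ℕ} (σ : ℝ → ℝ) (α : ℝ) (hα : 0 < α)
    (hdiff : Differentiable ℝ σ) (hσ' : ∀ t : ℝ, deriv σ t ∈ Set.Icc α 1)
    (A Δ : Matrix (Fin d) (Fin d) ℝ) (b : Fin d → ℝ)
    (z zb : ℝ → Fin d → ℝ)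
    (hz : ∀ t ∈ Set.Icc (0:ℝ) 1, ∀ i : Fin d,
      HasDerivWithinAt (fun s => z s i) (σ (A.mulVec (z t) i + b i)) (Set.Icc 0 1) t)
    (hzb : ∀ t ∈ Set.Icc (0:ℝ) 1, ∀ i : Fin d,
      HasDerivWithinAt (fun s => zb s i) (σ ((A + Δ).mulVec (zb t) i + b i)) (Set.Icc 0 1) t)
    (h0 : z 0 = zb 0)
    (δ M : ℝ) (hδne : δ ≠ 0)
    (hδ : IsGreatest {c | ∃ D : Matrix (Fin d) (Fin d) ℝ,
      (∀ i, D i i ∈ Set.Icc α 1) ∧ (∀ i j, i ≠ j → D i j = 0) ∧ c = mu2 (D * (A + Δ))} δ)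
    (hM : IsGreatest ((fun t => norm2 (z t)) '' Set.Icc (0:ℝ) 1) M) :
    norm2 (z 1 - zb 1) ≤ M * (⨆ i, singVals Δ i) * ((Real.exp δ - 1) / δ) := by
  set s := ⨆ i, singVals Δ i
  have hs0 : 0 ≤ s := Real.iSup_nonneg fun _ => Real.sqrt_nonneg _
  have hzM (t : ℝ) (ht : t ∈ Icc (0 : ℝ) 1) : ‖toLp 2 (z t)‖ ≤ M :=
    norm2_eq_norm_toLp (z t) ▸ hM.2 ⟨t, ht, rfl⟩
  have hM0 : 0 ≤ M := (norm_nonneg _).trans (hzM 0 (left_mem_Icc.2 zero_le_one))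
  have hδk (k : Fin d → ℝ) (hk : ∀ i, k i ∈ Icc α 1) : mu2 (diagonal k * (A + Δ)) ≤ δ :=
    hδ.2 ⟨diagonal k, by simpa using hk, fun i j hij => diagonal_apply_ne k hij, rfl⟩
  set w : ℝ → EuclideanSpace ℝ (Fin d) := fun t => toLp 2 (z t - zb t)
  have hw (t : ℝ) (ht : t ∈ Icc (0 : ℝ) 1) : HasDerivWithinAt w
      (toLp 2 fun i => σ ((A *ᵥ z t) i + b i) - σ (((A + Δ) *ᵥ zb t) i + b i)) (Icc 0 1) t :=
    (PiLp.hasFDerivAt_toLp 2 _).comp_hasDerivWithinAt t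
      (hasDerivWithinAt_pi.2 fun i => (hz t ht i).sub (hzb t ht i))
  have hgronwall := norm_le_gronwallBound_of_inner_deriv_right_le (δ := 0) (K := δ) (ε := s * M)
    (fun t ht => (hw t ht).continuousWithinAt)
    (fun t ht => (hw t (Ico_subset_Icc_self ht)).mono_of_mem_nhdsWithin (Icc_mem_nhdsGE_of_mem ht))
    (by simp [w, h0]) (mul_nonneg hs0 hM0)
    (fun t ht => (inner_sub_perturbed_field_le hα.le hdiff hσ' b hδk (z t) (zb t)).trans
      (by gcongr; exact hzM t (Ico_subset_Icc_self ht)))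
    1 (right_mem_Icc.2 zero_le_one)
  rw [norm2_eq_norm_toLp]
  convert hgronwall using 1
  rw [gronwallBound_of_K_ne_0 hδne]
  ring_nf

theorem perturbed_flow_upper_bound {d : ℕ} (σ : ℝ → ℝ) (α : ℝ) (hα : 0 < α) (hα1 : α ≤ 1)
    (hdiff : Differentiable ℝ σ) (hσ' : ∀ t : ℝ, deriv σ t ∈ Set.Icc α 1)
    (A Δ : Matrix (Fin d) (Fin d) ℝ) (b : Fin d → ℝ)
    (z zb : ℝ → Fin d → ℝ)
    (hz : ∀ t ∈ Set.Icc (0:ℝ) 1, ∀ i : Fin d,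
      HasDerivWithinAt (fun s => z s i) (σ (A.mulVec (z t) i + b i)) (Set.Icc 0 1) t)
    (hzb : ∀ t ∈ Set.Icc (0:ℝ) 1, ∀ i : Fin d,
      HasDerivWithinAt (fun s => zb s i) (σ ((A + Δ).mulVec (zb t) i + b i)) (Set.Icc 0 1) t)
    (h0 : z 0 = zb 0)
    (δ M : ℝ) (hδne : δ ≠ 0)
    (hδ : IsGreatest {c | ∃ D : Matrix (Fin d) (Fin d) ℝ,
      (∀ i, D i i ∈ Set.Icc α 1) ∧ (∀ i j, i ≠ j → D i j = 0) ∧ c = mu2 (D * (A + Δ))} δ)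
    (hM : IsGreatest ((fun t => norm2 (z t)) '' Set.Icc (0:ℝ) 1) M) :
    norm2 (z 1 - zb 1) ≤ M * (⨆ i, singVals Δ i) * ((Real.exp δ - 1) / δ) :=
  perturbed_flow_upper_bound_general σ α hα hdiff hσ' A Δ b z zb hz hzb h0 δ M hδne hδ hM
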